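/- Let A be positive semidefinite and P, Q, X, Y operators admitting A-adjoints. Then for any real t ≠ 0: dw_A(PXQ^♯ ± QYP^♯)² ≤ (t²‖P‖_A² + t⁻²‖Q‖_A²)² · [ (t²‖PX‖_A² + t⁻²‖QY‖_A²)² + α² ], where α = w_𝔸([[0,X],[Y,0]]) is the 𝔸-numerical radius of the block matrix with 𝔸 = diag(A,A). -/

import Mathlib

/-!
Write `⟨x, y⟩_A = ⟨√A x, √A y⟩`, so that the `A`-seminorm satisfies Cauchy–Schwarz and the
triangle inequality. An operator `T` with an `A`-adjoint `T'` is `A`-bounded: `S = T'T` is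
`A`-selfadjoint, and iterating `‖S^m x‖_A² ≤ ‖x‖_A ‖S^(2m) x‖_A` gives `‖S x‖_A ≤ ‖S‖ ‖x‖_A`.

For `T = PXQ^♯ + ε QYP^♯` with `|ε| = 1`, write `ε = c²`. For `‖x‖_A = 1` the vector
`z = (t P^♯x, c̄ t⁻¹ Q^♯x)` satisfies `⟨Tx, x⟩_A = c̄ ⟨[[0, X], [Y, 0]] z, z⟩_𝔸` and
`‖z‖_𝔸² ≤ t²‖P‖_A² + t⁻²‖Q‖_A²`, while `‖Tx‖_A ≤ ‖PX‖_A ‖Q‖_A + ‖QY‖_A ‖P‖_A` is bounded by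
Cauchy–Schwarz with the weights `t`, `t⁻¹`. The two signs are `ε = ±1`.
-/

noncomputable section

namespace DW

variable {H : Type*} [NormedAddCommGroup H] [InnerProductSpace ℂ H]

/-- The semi-inner product induced by `A`: `⟨x,y⟩_A = ⟨Ax, y⟩`. -/
def innA (A : H →L[ℂ] H) (x y : H) : ℂ := inner ℂ (A x) y

/-- The seminorm induced by `A`. -/
def normA (A : H →L[ℂ] H) (x : H) : ℝ := Real.sqrt (innA A x x).re

/-- `T` is `A`-bounded. -/
def IsABounded (A T : H →L[ℂ] H) : Prop := ∃ c > 0, ∀ x, normA A (T x) ≤ c * normA A x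

/-- `S` is an `A`-adjoint of `T`. -/
def IsAAdjointPair (A T S : H →L[ℂ] H) : Prop := ∀ x y, innA A (T x) y = innA A x (S y)

/-- The `A`-operator seminorm. -/
def opNormA (A T : H →L[ℂ] H) : ℝ := sSup {r | ∃ x, normA A x = 1 ∧ r = normA A (T x)}

/-- The `A`-minimum modulus. -/
def mA (A T : H →L[ℂ] H) : ℝ := sInf {r | ∃ x, normA A x = 1 ∧ r = normA A (T x)}

/-- The `A`-numerical radius. -/
def wA (A T : H →L[ℂ] H) : ℝ :=
  sSup {r | ∃ x, normA A x = 1 ∧ r = ‖innA A (T x) x‖}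

/-- The `A`-Crawford number. -/
def cA (A T : H →L[ℂ] H) : ℝ :=
  sInf {r | ∃ x, normA A x = 1 ∧ r = ‖innA A (T x) x‖}

/-- The `A`-Davis-Wielandt radius. -/
def dwA (A T : H →L[ℂ] H) : ℝ :=
  sSup {r | ∃ x, normA A x = 1 ∧
    r = Real.sqrt (‖innA A (T x) x‖ ^ 2 + normA A (T x) ^ 4)}

/-- The semi-inner product on `H ⊕ H` induced by `𝔸 = diag(A,A)`. -/
def innA2 (A : H →L[ℂ] H) (z w : H × H) : ℂ := innA A z.1 w.1 + innA A z.2 w.2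

/-- The seminorm on `H ⊕ H` induced by `𝔸 = diag(A,A)`. -/
def normA2 (A : H →L[ℂ] H) (z : H × H) : ℝ := Real.sqrt (innA2 A z z).re

/-- The `𝔸`-numerical radius on `H ⊕ H`, `𝔸 = diag(A,A)`. -/
def wA2 (A : H →L[ℂ] H) (T : H × H →L[ℂ] H × H) : ℝ :=
  sSup {r | ∃ z, normA2 A z = 1 ∧ r = ‖innA2 A (T z) z‖}

/-- The `𝔸`-Davis-Wielandt radius on `H ⊕ H`, `𝔸 = diag(A,A)`. -/
def dwA2 (A : H →L[ℂ] H) (T : H × H →L[ℂ] H × H) : ℝ :=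
  sSup {r | ∃ z, normA2 A z = 1 ∧
    r = Real.sqrt (‖innA2 A (T z) z‖ ^ 2 + normA2 A (T z) ^ 4)}

/-- The block operator `[[0, X], [Y, 0]]` on `H ⊕ H`. -/
def offDiag (X Y : H →L[ℂ] H) : H × H →L[ℂ] H × H :=
  (X.comp (ContinuousLinearMap.snd ℂ H H)).prod (Y.comp (ContinuousLinearMap.fst ℂ H H))

end DW

open DW

namespace DW

open ComplexConjugate

lemma le_sSup_mul_pow_of_homogeneous {V : Type*} [AddCommGroup V] [Module ℂ V]
    {N g : V → ℝ} {k : ℕ} {C : ℝ} (hk : k ≠ 0) (hN0 : ∀ z, 0 ≤ N z)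
    (hN : ∀ (c : ℂ) z, N (c • z) = ‖c‖ * N z) (hg : ∀ (c : ℂ) z, g (c • z) = ‖c‖ ^ k * g z)
    (hC : ∀ z, g z ≤ C * N z ^ k) (z : V) :
    g z ≤ sSup {r | ∃ z, N z = 1 ∧ r = g z} * N z ^ k := by
  rcases (hN0 z).eq_or_lt with hz | hz
  · simpa [← hz, zero_pow hk] using hC z
  have hbdd : BddAbove {r | ∃ z, N z = 1 ∧ r = g z} :=
    ⟨C, by rintro r ⟨w, hw, rfl⟩; simpa [hw] using hC w⟩
  have hc : ‖((N z)⁻¹ : ℂ)‖ = (N z)⁻¹ := by simp [hz.le]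
  have hle := le_csSup hbdd ⟨((N z)⁻¹ : ℂ) • z, by rw [hN, hc, inv_mul_cancel₀ hz.ne'], rfl⟩
  rw [hg, hc, inv_pow] at hle
  calc g z = ((N z ^ k)⁻¹ * g z) * N z ^ k := by field_simp
    _ ≤ _ := by gcongr

lemma sq_mul_add_mul_le {t : ℝ} (ht : t ≠ 0) (p q u v : ℝ) :
    (u * q + v * p) ^ 2 ≤
      (t ^ 2 * p ^ 2 + t⁻¹ ^ 2 * q ^ 2) * (t ^ 2 * u ^ 2 + t⁻¹ ^ 2 * v ^ 2) := by
  have ht2 : t ^ 2 * t⁻¹ ^ 2 = 1 := by field_simp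
  nlinarith [sq_nonneg (t ^ 2 * p * u - t⁻¹ ^ 2 * q * v)]

lemma le_of_forall_pow_two_pow_mul_le {a b c C : ℝ} (hb : 0 < b) (hc : 0 ≤ c)
    (h : ∀ n : ℕ, a ^ 2 ^ n * b ≤ c ^ 2 ^ n * C) : a ≤ c := by
  by_contra! hlt
  rcases hc.eq_or_lt with rfl | hc
  · have := h 0
    simp only [pow_zero, pow_one, zero_mul] at this
    nlinarith
  obtain ⟨n, hn⟩ := pow_unbounded_of_one_lt (C / b) ((one_lt_div hc).2 hlt)
  have h1 : (a / c) ^ n ≤ (a / c) ^ 2 ^ n :=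
    pow_le_pow_right₀ ((one_lt_div hc).2 hlt).le Nat.lt_two_pow_self.le
  have h2 : (a / c) ^ 2 ^ n ≤ C / b := by
    rw [div_pow, div_le_div_iff₀ (by positivity) hb]
    linarith [h n]
  linarith

variable {H : Type*} [NormedAddCommGroup H] [InnerProductSpace ℂ H]

lemma innA_smul_smul (A : H →L[ℂ] H) (a b : ℂ) (x y : H) :
    innA A (a • x) (b • y) = conj a * b * innA A x y := by
  simp only [innA, map_smul, inner_smul_left, inner_smul_right]
  ring

lemma innA_smul_left (A : H →L[ℂ] H) (a : ℂ) (x y : H) :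
    innA A (a • x) y = conj a * innA A x y := by
  simp only [innA, map_smul, inner_smul_left]

lemma innA_add_left (A : H →L[ℂ] H) (x y z : H) :
    innA A (x + y) z = innA A x z + innA A y z := by
  simp only [innA, map_add, inner_add_left]

lemma normA_nonneg (A : H →L[ℂ] H) (x : H) : 0 ≤ normA A x := Real.sqrt_nonneg _

lemma normA_smul (A : H →L[ℂ] H) (c : ℂ) (x : H) : normA A (c • x) = ‖c‖ * normA A x := by
  have h : (innA A (c • x) (c • x)).re = ‖c‖ ^ 2 * (innA A x x).re := by
    rw [innA_smul_smul, Complex.conj_mul', ← Complex.ofReal_pow, Complex.re_ofReal_mul]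
  rw [normA, normA, h, Real.sqrt_mul (by positivity), Real.sqrt_sq (norm_nonneg c)]

lemma opNormA_nonneg (A T : H →L[ℂ] H) : 0 ≤ opNormA A T :=
  Real.sSup_nonneg (by rintro r ⟨x, -, rfl⟩; exact normA_nonneg A _)

lemma normA2_nonneg (A : H →L[ℂ] H) (z : H × H) : 0 ≤ normA2 A z := Real.sqrt_nonneg _

lemma innA2_smul_smul (A : H →L[ℂ] H) (a b : ℂ) (z w : H × H) :
    innA2 A (a • z) (b • w) = conj a * b * innA2 A z w := by
  simp only [innA2, Prod.smul_fst, Prod.smul_snd, innA_smul_smul]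
  ring

lemma normA2_smul (A : H →L[ℂ] H) (c : ℂ) (z : H × H) :
    normA2 A (c • z) = ‖c‖ * normA2 A z := by
  have h : (innA2 A (c • z) (c • z)).re = ‖c‖ ^ 2 * (innA2 A z z).re := by
    rw [innA2_smul_smul, Complex.conj_mul', ← Complex.ofReal_pow, Complex.re_ofReal_mul]
  rw [normA2, normA2, h, Real.sqrt_mul (by positivity), Real.sqrt_sq (norm_nonneg c)]

lemma wA2_nonneg (A : H →L[ℂ] H) (T : H × H →L[ℂ] H × H) : 0 ≤ wA2 A T :=
  Real.sSup_nonneg (by rintro r ⟨z, -, rfl⟩; exact norm_nonneg _)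

lemma norm_innA2_le_wA2_mul {A : H →L[ℂ] H} {T : H × H →L[ℂ] H × H} {C : ℝ}
    (hT : ∀ z, ‖innA2 A (T z) z‖ ≤ C * normA2 A z ^ 2) (z : H × H) :
    ‖innA2 A (T z) z‖ ≤ wA2 A T * normA2 A z ^ 2 :=
  le_sSup_mul_pow_of_homogeneous two_ne_zero (normA2_nonneg A) (normA2_smul A)
    (fun c z => by rw [map_smul, innA2_smul_smul, norm_mul, norm_mul, RCLike.norm_conj, sq]) hT z

lemma IsABounded.comp {A T U : H →L[ℂ] H} (hT : IsABounded A T) (hU : IsABounded A U) :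
    IsABounded A (T.comp U) := by
  obtain ⟨c, hc, hTc⟩ := hT
  obtain ⟨d, hd, hUd⟩ := hU
  refine ⟨c * d, mul_pos hc hd, fun x => (hTc (U x)).trans ?_⟩
  rw [mul_assoc]
  exact mul_le_mul_of_nonneg_left (hUd x) hc.le

lemma IsABounded.normA_apply_le_opNormA_mul {A T : H →L[ℂ] H} (hT : IsABounded A T) (x : H) :
    normA A (T x) ≤ opNormA A T * normA A x := by
  obtain ⟨c, -, hc⟩ := hT
  have h := le_sSup_mul_pow_of_homogeneous (g := fun x => normA A (T x)) one_ne_zero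
    (normA_nonneg A) (normA_smul A)
    (fun c z => by rw [map_smul, normA_smul, pow_one]) (fun z => by rw [pow_one]; exact hc z) x
  rwa [pow_one] at h

lemma IsAAdjointPair.comp {A T T' U U' : H →L[ℂ] H} (hT : IsAAdjointPair A T T')
    (hU : IsAAdjointPair A U U') : IsAAdjointPair A (T.comp U) (U'.comp T') :=
  fun x y => (hT (U x) y).trans (hU x (T' y))

lemma IsAAdjointPair.pow {A S : H →L[ℂ] H} (hS : IsAAdjointPair A S S) :
    ∀ n : ℕ, IsAAdjointPair A (S ^ n) (S ^ n)
  | 0 => fun _ _ => rfl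
  | n + 1 => by
    have h := (hS.pow n).comp hS
    rwa [← ContinuousLinearMap.mul_def, ← ContinuousLinearMap.mul_def, ← pow_succ,
      ← pow_succ'] at h

lemma dwA_sq_le {A T : H →L[ℂ] H} {α β : ℝ}
    (hα : ∀ x, normA A x = 1 → ‖innA A (T x) x‖ ≤ α)
    (hβ : ∀ x, normA A x = 1 → normA A (T x) ^ 2 ≤ β) : dwA A T ^ 2 ≤ α ^ 2 + β ^ 2 := by
  have hle : dwA A T ≤ √(α ^ 2 + β ^ 2) := by
    refine Real.sSup_le ?_ (Real.sqrt_nonneg _)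
    rintro r ⟨x, hx, rfl⟩
    refine Real.sqrt_le_sqrt (add_le_add ?_ ?_)
    · exact pow_le_pow_left₀ (norm_nonneg _) (hα x hx) 2
    · rw [show 4 = 2 * 2 from rfl, pow_mul]
      exact pow_le_pow_left₀ (sq_nonneg _) (hβ x hx) 2
  have h0 : 0 ≤ dwA A T := Real.sSup_nonneg (by rintro r ⟨x, -, rfl⟩; exact Real.sqrt_nonneg _)
  calc dwA A T ^ 2 ≤ √(α ^ 2 + β ^ 2) ^ 2 := by gcongr
    _ = α ^ 2 + β ^ 2 := Real.sq_sqrt (by positivity)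

lemma innA_add_smul_apply_self_eq_innA2_offDiag {A P Q P' Q' : H →L[ℂ] H}
    (hP' : IsAAdjointPair A P P') (hQ' : IsAAdjointPair A Q Q') (X Y : H →L[ℂ] H) {t : ℝ}
    (ht : t ≠ 0) {c : ℂ} (hc : ‖c‖ = 1) (x : H) :
    innA A ((P.comp (X.comp Q') + c ^ 2 • Q.comp (Y.comp P')) x) x =
      conj c * innA2 A (offDiag X Y ((t : ℂ) • P' x, (conj c * (t : ℂ)⁻¹) • Q' x))
        ((t : ℂ) • P' x, (conj c * (t : ℂ)⁻¹) • Q' x) := by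
  have htC : (t : ℂ) ≠ 0 := by exact_mod_cast ht
  have hcc : conj c * c = 1 := by rw [Complex.conj_mul', hc]; norm_num
  show innA A (P (X (Q' x)) + c ^ 2 • Q (Y (P' x))) x =
    conj c * (innA A (X ((conj c * (t : ℂ)⁻¹) • Q' x)) ((t : ℂ) • P' x) +
      innA A (Y ((t : ℂ) • P' x)) ((conj c * (t : ℂ)⁻¹) • Q' x))
  rw [innA_add_left, innA_smul_left, hP', hQ', map_smul, map_smul, innA_smul_smul,
    innA_smul_smul]
  simp only [map_mul, map_inv₀, map_pow, Complex.conj_conj, Complex.conj_ofReal]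
  linear_combination (-innA A (X (Q' x)) (P' x)) * hcc -
    (innA A (X (Q' x)) (P' x) * conj c * c + conj c ^ 2 * innA A (Y (P' x)) (Q' x)) *
      mul_inv_cancel₀ htC

section Positive

variable [CompleteSpace H] {A : H →L[ℂ] H}

lemma innA_eq_inner_sqrt (hA : A.IsPositive) (x y : H) :
    innA A x y = inner ℂ (CFC.sqrt A x) (CFC.sqrt A y) := by
  have hsa : IsSelfAdjoint (CFC.sqrt A) := IsSelfAdjoint.of_nonneg (CFC.sqrt_nonneg A)
  calc innA A x y = inner ℂ ((CFC.sqrt A * CFC.sqrt A) x) y := by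
        rw [innA, CFC.sqrt_mul_sqrt_self A ((A.nonneg_iff_isPositive).2 hA)]
    _ = _ := by
        rw [mul_apply_eq_comp, ← ContinuousLinearMap.adjoint_inner_right, hsa.adjoint_eq]

lemma re_innA_self (hA : A.IsPositive) (x : H) : (innA A x x).re = ‖CFC.sqrt A x‖ ^ 2 := by
  rw [innA_eq_inner_sqrt hA]
  exact inner_self_eq_norm_sq (𝕜 := ℂ) _

lemma normA_eq_norm_sqrt (hA : A.IsPositive) (x : H) : normA A x = ‖CFC.sqrt A x‖ := by
  rw [normA, re_innA_self hA, Real.sqrt_sq (norm_nonneg _)]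

lemma normA_sq (hA : A.IsPositive) (x : H) : normA A x ^ 2 = (innA A x x).re := by
  rw [normA_eq_norm_sqrt hA, re_innA_self hA]

lemma normA_le_norm_sqrt_mul (hA : A.IsPositive) (x : H) : normA A x ≤ ‖CFC.sqrt A‖ * ‖x‖ := by
  rw [normA_eq_norm_sqrt hA]
  exact (CFC.sqrt A).le_opNorm x

lemma norm_innA_le (hA : A.IsPositive) (x y : H) : ‖innA A x y‖ ≤ normA A x * normA A y := by
  rw [innA_eq_inner_sqrt hA, normA_eq_norm_sqrt hA, normA_eq_norm_sqrt hA]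
  exact norm_inner_le_norm _ _

lemma normA_add_le (hA : A.IsPositive) (x y : H) : normA A (x + y) ≤ normA A x + normA A y := by
  simp only [normA_eq_norm_sqrt hA, map_add]
  exact norm_add_le _ _

lemma conj_innA (hA : A.IsPositive) (x y : H) : conj (innA A x y) = innA A y x := by
  rw [innA_eq_inner_sqrt hA, innA_eq_inner_sqrt hA, inner_conj_symm]

lemma normA2_sq (hA : A.IsPositive) (z : H × H) :
    normA2 A z ^ 2 = normA A z.1 ^ 2 + normA A z.2 ^ 2 := by
  rw [normA2, innA2, Complex.add_re, ← normA_sq hA, ← normA_sq hA, Real.sq_sqrt (by positivity)]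

lemma IsAAdjointPair.symm {T T' : H →L[ℂ] H} (hA : A.IsPositive) (hT : IsAAdjointPair A T T') :
    IsAAdjointPair A T' T := fun x y => by
  rw [← conj_innA hA, ← hT, conj_innA hA]

lemma IsAAdjointPair.normA_apply_sq_le {T T' : H →L[ℂ] H} (hA : A.IsPositive)
    (hT : IsAAdjointPair A T T') (x : H) :
    normA A (T x) ^ 2 ≤ normA A x * normA A (T' (T x)) :=
  calc normA A (T x) ^ 2 = (innA A x (T' (T x))).re := by rw [normA_sq hA, hT]
    _ ≤ ‖innA A x (T' (T x))‖ := Complex.re_le_norm _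
    _ ≤ normA A x * normA A (T' (T x)) := norm_innA_le hA _ _

lemma IsAAdjointPair.normA_apply_pow_mul_le {S : H →L[ℂ] H} (hA : A.IsPositive)
    (hS : IsAAdjointPair A S S) (x : H) (n : ℕ) :
    normA A (S x) ^ 2 ^ n * normA A x ≤ normA A x ^ 2 ^ n * normA A ((S ^ 2 ^ n) x) := by
  induction n with
  | zero => simp [mul_comm]
  | succ n ih =>
    rcases (normA_nonneg A x).eq_or_lt with hx | hx
    · simp [← hx]
    have hsq := (hS.pow (2 ^ n)).normA_apply_sq_le hA x
    rw [← mul_apply_eq_comp, ← pow_add, ← two_mul, ← pow_succ'] at hsq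
    refine le_of_mul_le_mul_right ?_ hx
    calc normA A (S x) ^ 2 ^ (n + 1) * normA A x * normA A x
        = (normA A (S x) ^ 2 ^ n * normA A x) ^ 2 := by ring
      _ ≤ (normA A x ^ 2 ^ n * normA A ((S ^ 2 ^ n) x)) ^ 2 :=
        pow_le_pow_left₀ (mul_nonneg (pow_nonneg (normA_nonneg A _) _) (normA_nonneg A _)) ih 2
      _ = normA A x ^ 2 ^ (n + 1) * normA A ((S ^ 2 ^ n) x) ^ 2 := by ring
      _ ≤ normA A x ^ 2 ^ (n + 1) * (normA A x * normA A ((S ^ 2 ^ (n + 1)) x)) := by gcongr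
      _ = _ := by ring

lemma IsAAdjointPair.normA_apply_le_norm_mul {S : H →L[ℂ] H} (hA : A.IsPositive)
    (hS : IsAAdjointPair A S S) (x : H) : normA A (S x) ≤ ‖S‖ * normA A x := by
  rcases (normA_nonneg A x).eq_or_lt with hx | hx
  · have h := hS.normA_apply_sq_le hA x
    rw [← hx, zero_mul] at h
    rw [← hx, mul_zero]
    nlinarith [normA_nonneg A (S x)]
  refine le_of_forall_pow_two_pow_mul_le hx (by positivity) (C := ‖CFC.sqrt A‖ * ‖x‖) fun n => ?_
  calc normA A (S x) ^ 2 ^ n * normA A x ≤ normA A x ^ 2 ^ n * normA A ((S ^ 2 ^ n) x) :=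
        hS.normA_apply_pow_mul_le hA x n
    _ ≤ normA A x ^ 2 ^ n * (‖CFC.sqrt A‖ * (‖S‖ ^ 2 ^ n * ‖x‖)) := by
        gcongr
        refine (normA_le_norm_sqrt_mul hA _).trans ?_
        gcongr
        exact ((S ^ 2 ^ n).le_opNorm x).trans
          (mul_le_mul_of_nonneg_right (norm_pow_le' S (by positivity)) (norm_nonneg x))
    _ = (‖S‖ * normA A x) ^ 2 ^ n * (‖CFC.sqrt A‖ * ‖x‖) := by ring

lemma IsAAdjointPair.isABounded {T T' : H →L[ℂ] H} (hA : A.IsPositive)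
    (hT : IsAAdjointPair A T T') : IsABounded A T := by
  refine ⟨‖T'.comp T‖ + 1, by positivity, fun x => ?_⟩
  have h1 := hT.normA_apply_sq_le hA x
  have h2 := ((hT.symm hA).comp hT).normA_apply_le_norm_mul hA x
  have hx := normA_nonneg A x
  have hs := norm_nonneg (T'.comp T)
  refine (pow_le_pow_iff_left₀ (normA_nonneg A _) (by positivity) two_ne_zero).1 ?_
  calc normA A (T x) ^ 2 ≤ normA A x * (‖T'.comp T‖ * normA A x) :=
        h1.trans (mul_le_mul_of_nonneg_left h2 hx)
    _ ≤ ((‖T'.comp T‖ + 1) * normA A x) ^ 2 := by nlinarith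

lemma IsAAdjointPair.normA_adjoint_apply_le {T T' : H →L[ℂ] H} (hA : A.IsPositive)
    (hT : IsAAdjointPair A T T') (y : H) : normA A (T' y) ≤ opNormA A T * normA A y := by
  rcases (normA_nonneg A (T' y)).eq_or_lt with h0 | h0
  · rw [← h0]
    exact mul_nonneg (opNormA_nonneg A T) (normA_nonneg A y)
  refine le_of_mul_le_mul_right ?_ h0
  calc normA A (T' y) * normA A (T' y) = normA A (T' y) ^ 2 := (sq _).symm
    _ ≤ normA A y * normA A (T (T' y)) := (hT.symm hA).normA_apply_sq_le hA y
    _ ≤ normA A y * (opNormA A T * normA A (T' y)) :=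
        mul_le_mul_of_nonneg_left ((hT.isABounded hA).normA_apply_le_opNormA_mul _)
          (normA_nonneg A y)
    _ = opNormA A T * normA A y * normA A (T' y) := by ring

lemma norm_innA2_offDiag_le_wA2_mul {X Y : H →L[ℂ] H} (hA : A.IsPositive)
    (hX : IsABounded A X) (hY : IsABounded A Y) (z : H × H) :
    ‖innA2 A (offDiag X Y z) z‖ ≤ wA2 A (offDiag X Y) * normA2 A z ^ 2 := by
  obtain ⟨c, hc, hXc⟩ := hX
  obtain ⟨d, hd, hYd⟩ := hY
  refine norm_innA2_le_wA2_mul (C := c + d) (fun z => ?_) z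
  have h1 := normA_nonneg A z.1
  have h2 := normA_nonneg A z.2
  calc ‖innA A (X z.2) z.1 + innA A (Y z.1) z.2‖
      ≤ normA A (X z.2) * normA A z.1 + normA A (Y z.1) * normA A z.2 :=
        (norm_add_le _ _).trans (add_le_add (norm_innA_le hA _ _) (norm_innA_le hA _ _))
    _ ≤ c * normA A z.2 * normA A z.1 + d * normA A z.1 * normA A z.2 := by
        gcongr
        exacts [hXc _, hYd _]
    _ ≤ (c + d) * normA2 A z ^ 2 := by
        rw [normA2_sq hA]
        nlinarith [sq_nonneg (normA A z.1 - normA A z.2)]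

lemma norm_innA_add_smul_apply_self_le {P Q X Y P' Q' : H →L[ℂ] H} (hA : A.IsPositive)
    (hP' : IsAAdjointPair A P P') (hQ' : IsAAdjointPair A Q Q')
    (hX : IsABounded A X) (hY : IsABounded A Y) {t : ℝ} (ht : t ≠ 0) {c : ℂ} (hc : ‖c‖ = 1)
    {x : H} (hx : normA A x = 1) :
    ‖innA A ((P.comp (X.comp Q') + c ^ 2 • Q.comp (Y.comp P')) x) x‖ ≤
      wA2 A (offDiag X Y) * (t ^ 2 * opNormA A P ^ 2 + t⁻¹ ^ 2 * opNormA A Q ^ 2) := by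
  rw [innA_add_smul_apply_self_eq_innA2_offDiag hP' hQ' X Y ht hc, norm_mul, RCLike.norm_conj,
    hc, one_mul]
  refine (norm_innA2_offDiag_le_wA2_mul hA hX hY _).trans
    (mul_le_mul_of_nonneg_left ?_ (wA2_nonneg A _))
  rw [normA2_sq hA, normA_smul, normA_smul, norm_mul, RCLike.norm_conj, hc, one_mul, norm_inv,
    Complex.norm_real, Real.norm_eq_abs, mul_pow, mul_pow, inv_pow, sq_abs, ← inv_pow]
  have hP'x := pow_le_pow_left₀ (normA_nonneg A _) (hP'.normA_adjoint_apply_le hA x) 2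
  have hQ'x := pow_le_pow_left₀ (normA_nonneg A _) (hQ'.normA_adjoint_apply_le hA x) 2
  rw [hx, mul_one] at hP'x hQ'x
  gcongr

lemma normA_add_smul_apply_le {P Q X Y P' Q' : H →L[ℂ] H} (hA : A.IsPositive)
    (hP' : IsAAdjointPair A P P') (hQ' : IsAAdjointPair A Q Q')
    (hX : IsABounded A X) (hY : IsABounded A Y) {ε : ℂ} (hε : ‖ε‖ = 1)
    {x : H} (hx : normA A x = 1) :
    normA A ((P.comp (X.comp Q') + ε • Q.comp (Y.comp P')) x) ≤
      opNormA A (P.comp X) * opNormA A Q + opNormA A (Q.comp Y) * opNormA A P := by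
  have hP'x := hP'.normA_adjoint_apply_le hA x
  have hQ'x := hQ'.normA_adjoint_apply_le hA x
  rw [hx, mul_one] at hP'x hQ'x
  rw [add_apply, smul_apply]
  refine (normA_add_le hA _ _).trans ?_
  rw [normA_smul, hε, one_mul]
  gcongr
  · exact (hP'.isABounded hA |>.comp hX).normA_apply_le_opNormA_mul (Q' x) |>.trans
      (mul_le_mul_of_nonneg_left hQ'x (opNormA_nonneg A _))
  · exact (hQ'.isABounded hA |>.comp hY).normA_apply_le_opNormA_mul (P' x) |>.trans
      (mul_le_mul_of_nonneg_left hP'x (opNormA_nonneg A _))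

theorem dwA_add_smul_sq_le {P Q X Y P' Q' : H →L[ℂ] H} (hA : A.IsPositive)
    (hP' : IsAAdjointPair A P P') (hQ' : IsAAdjointPair A Q Q')
    (hX : IsABounded A X) (hY : IsABounded A Y) {t : ℝ} (ht : t ≠ 0) {ε : ℂ} (hε : ‖ε‖ = 1) :
    dwA A (P.comp (X.comp Q') + ε • Q.comp (Y.comp P')) ^ 2 ≤
      (t ^ 2 * opNormA A P ^ 2 + t⁻¹ ^ 2 * opNormA A Q ^ 2) ^ 2 *
        ((t ^ 2 * opNormA A (P.comp X) ^ 2 + t⁻¹ ^ 2 * opNormA A (Q.comp Y) ^ 2) ^ 2 +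
          wA2 A (offDiag X Y) ^ 2) := by
  obtain ⟨c, rfl⟩ := IsAlgClosed.exists_pow_nat_eq ε two_pos
  have hc : ‖c‖ = 1 := by
    rwa [norm_pow, pow_eq_one_iff_of_nonneg (norm_nonneg c) two_ne_zero] at hε
  set K := t ^ 2 * opNormA A P ^ 2 + t⁻¹ ^ 2 * opNormA A Q ^ 2
  set M := t ^ 2 * opNormA A (P.comp X) ^ 2 + t⁻¹ ^ 2 * opNormA A (Q.comp Y) ^ 2
  calc _ ≤ (wA2 A (offDiag X Y) * K) ^ 2 + (K * M) ^ 2 :=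
        dwA_sq_le (fun x hx => norm_innA_add_smul_apply_self_le hA hP' hQ' hX hY ht hc hx)
          fun x hx => (pow_le_pow_left₀ (normA_nonneg A _)
            (normA_add_smul_apply_le hA hP' hQ' hX hY hε hx) 2).trans (sq_mul_add_mul_le ht _ _ _ _)
    _ = K ^ 2 * (M ^ 2 + wA2 A (offDiag X Y) ^ 2) := by ring

end Positive

end DW

variable {H : Type*} [NormedAddCommGroup H] [InnerProductSpace ℂ H] [CompleteSpace H]

theorem stmt16 (A P Q X Y P' Q' : H →L[ℂ] H) (hA : A.IsPositive)
    (hP' : IsAAdjointPair A P P') (hQ' : IsAAdjointPair A Q Q')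
    (hX : ∃ X', IsAAdjointPair A X X') (hY : ∃ Y', IsAAdjointPair A Y Y')
    (t : ℝ) (ht : t ≠ 0) :
    dwA A (P.comp (X.comp Q') + Q.comp (Y.comp P')) ^ 2 ≤
      (t ^ 2 * opNormA A P ^ 2 + t⁻¹ ^ 2 * opNormA A Q ^ 2) ^ 2 *
        ((t ^ 2 * opNormA A (P.comp X) ^ 2 + t⁻¹ ^ 2 * opNormA A (Q.comp Y) ^ 2) ^ 2 +
          wA2 A (offDiag X Y) ^ 2) ∧
    dwA A (P.comp (X.comp Q') - Q.comp (Y.comp P')) ^ 2 ≤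
      (t ^ 2 * opNormA A P ^ 2 + t⁻¹ ^ 2 * opNormA A Q ^ 2) ^ 2 *
        ((t ^ 2 * opNormA A (P.comp X) ^ 2 + t⁻¹ ^ 2 * opNormA A (Q.comp Y) ^ 2) ^ 2 +
          wA2 A (offDiag X Y) ^ 2) := by
  obtain ⟨X', hX'⟩ := hX
  obtain ⟨Y', hY'⟩ := hY
  have hXb := hX'.isABounded hA
  have hYb := hY'.isABounded hA
  exact ⟨by simpa using dwA_add_smul_sq_le hA hP' hQ' hXb hYb ht norm_one,
    by simpa [sub_eq_add_neg] using dwA_add_smul_sq_le hA hP' hQ' hXb hYb ht (ε := -1) (by simp)⟩
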